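/- Let K be a positive integer and a_1,…,a_K, b_1,…,b_K, T be positive reals. Then the function N(τ) = (1/(KT)) · (Σ_{k=1}^K a_k·∏_{l≠k}(τ + b_l)) / (Σ_{k=1}^K τ·∏_{l≠k}(τ + b_l)), equivalently N(τ) = (1/(KT)) · (Σ_{k=1}^K a_k/(τ + b_k)) / (Σ_{k=1}^K τ/(τ + b_k)), is strictly decreasing on the interval (0, ∞) (its first derivative N′(τ) is strictly negative for every τ > 0). -/
import Mathlib


/-- The function `N(τ) = (1/(KT)) · (Σ_{k=1}^K a_k/(τ + b_k)) / (Σ_{k=1}^K τ/(τ + b_k))`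
is strictly decreasing on `(0, ∞)` when `T` and all the `a_k`, `b_k` are positive. -/
theorem N_strictAntiOn
    (K : ℕ) (hK : 0 < K) (a b : Fin K → ℝ) (ha : ∀ k, 0 < a k) (hb : ∀ k, 0 < b k)
    (T : ℝ) (hT : 0 < T) :
    StrictAntiOn
      (fun τ : ℝ =>
        (1 / ((K : ℝ) * T)) * (∑ k, a k / (τ + b k)) / (∑ k, τ / (τ + b k)))
      (Set.Ioi (0 : ℝ)) := by
  have hne : (Finset.univ : Finset (Fin K)).Nonempty := Finset.univ_nonempty_iff.mpr
    (Fin.pos_iff_nonempty.mp hK)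
  have hc : (0:ℝ) < 1 / ((K : ℝ) * T) := by positivity
  intro x hx y hy hxy
  simp only [Set.mem_Ioi] at hx hy
  have hAx : (0:ℝ) < ∑ k, a k / (x + b k) := Finset.sum_pos
    (fun k _ => div_pos (ha k) (by linarith [hb k])) hne
  have hAlt : (∑ k, a k / (y + b k)) < ∑ k, a k / (x + b k) := by
    apply Finset.sum_lt_sum_of_nonempty hne
    intro k _
    exact div_lt_div_of_pos_left (ha k) (by linarith [hb k]) (by linarith [hb k])
  have hBx : (0:ℝ) < ∑ k, x / (x + b k) := Finset.sum_pos
    (fun k _ => div_pos hx (by linarith [hb k])) hne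
  have hBy : (0:ℝ) < ∑ k, y / (y + b k) := Finset.sum_pos
    (fun k _ => div_pos (by linarith) (by linarith [hb k])) hne
  have hBlt : (∑ k, x / (x + b k)) < ∑ k, y / (y + b k) := by
    apply Finset.sum_lt_sum_of_nonempty hne
    intro k _
    rw [div_lt_div_iff₀ (by linarith [hb k]) (by linarith [hb k])]
    nlinarith [hb k]
  have hAy : (0:ℝ) < ∑ k, a k / (y + b k) := Finset.sum_pos
    (fun k _ => div_pos (ha k) (by linarith [hb k])) hne
  simp only
  rw [div_lt_div_iff₀ hBy hBx, mul_assoc, mul_assoc]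
  have : (∑ k, a k / (y + b k)) * (∑ k, x / (x + b k)) <
      (∑ k, a k / (x + b k)) * (∑ k, y / (y + b k)) := by
    calc (∑ k, a k / (y + b k)) * (∑ k, x / (x + b k))
        < (∑ k, a k / (x + b k)) * (∑ k, x / (x + b k)) := by
          exact mul_lt_mul_of_pos_right hAlt hBx
      _ < (∑ k, a k / (x + b k)) * (∑ k, y / (y + b k)) :=
          mul_lt_mul_of_pos_left hBlt hAx
  exact mul_lt_mul_of_pos_left this hc
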